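/- In any model category, the class of weak equivalences between cofibrant objects is closed under cobase change along cofibrations: given a pushout square with A → B a weak equivalence between cofibrant objects and A → A' a cofibration, the induced map A' → B' = A' ∐_A B is a weak equivalence. -/

import Mathlib

open CategoryTheory CategoryTheory.Limits

universe v u

/-- A (Quillen) model structure on a category `M`: three classes of maps
(weak equivalences, fibrations, cofibrations) satisfying two-out-of-three,
closure under retracts, the lifting axioms, and the factorization axioms.
(Bicompleteness of `M` is imposed separately as `HasLimits`/`HasColimits`.) -/
structure ModelStructure (M : Type u) [Category.{v} M] where
  W : MorphismProperty M
  Fib : MorphismProperty M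
  Cof : MorphismProperty M
  w_two_out_of_three : W.HasTwoOutOfThreeProperty
  retract : ∀ (P : MorphismProperty M), P = W ∨ P = Fib ∨ P = Cof →
    ∀ {A B A' B' : M} (f : A ⟶ B) (f' : A' ⟶ B') (iA : A' ⟶ A) (rA : A ⟶ A')
      (iB : B' ⟶ B) (rB : B ⟶ B'),
      iA ≫ rA = 𝟙 A' → iB ≫ rB = 𝟙 B' → iA ≫ f = f' ≫ iB →
      rA ≫ f' = f ≫ rB → P f → P f'
  lift_cof_trivFib : ∀ {A B X Y : M} (f : A ⟶ B) (g : X ⟶ Y),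
    Cof f → Fib g → W g → HasLiftingProperty f g
  lift_trivCof_fib : ∀ {A B X Y : M} (f : A ⟶ B) (g : X ⟶ Y),
    Cof f → W f → Fib g → HasLiftingProperty f g
  fact_cof_trivFib : ∀ {X Y : M} (f : X ⟶ Y),
    ∃ (Z : M) (g : X ⟶ Z) (h : Z ⟶ Y), Cof g ∧ Fib h ∧ W h ∧ g ≫ h = f
  fact_trivCof_fib : ∀ {X Y : M} (f : X ⟶ Y),
    ∃ (Z : M) (g : X ⟶ Z) (h : Z ⟶ Y), Cof g ∧ W g ∧ Fib h ∧ g ≫ h = f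

/-- An object is cofibrant if the map from the initial object is a
cofibration. -/
def ModelStructure.Cofibrant {M : Type u} [Category.{v} M] [HasInitial M]
    (ms : ModelStructure M) (X : M) : Prop :=
  ms.Cof (initial.to X)


/-!
The map `f'` is induced on pushouts by the map of spans `(A' ← A → A) ⟶ (A' ← A → B)` given by
`(𝟙, 𝟙, f)`, and the proof is Ken Brown's lemma for spans. From a cylinder `P` of `A`, a Brown
factorization `A → Z ← B` of `f` and a cylinder `Q` of `A'` relative to `i`, one builds a span
`Q.I ← P.I → Z` and maps to it from both spans which induce trivial cofibrations on pushouts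
(their component at `Z` and their relative latching map are trivial cofibrations). A map from
`Q.I ← P.I → Z` back to `A' ← A → B` retracts the second of them and composes with the first
to `(𝟙, 𝟙, f)`, so two-out-of-three concludes.
-/

open HomotopicalAlgebra MorphismProperty

attribute [local simp] pushout.inl_desc pushout.inr_desc pushout.inl_desc_assoc
  pushout.inr_desc_assoc coprod.inl_desc coprod.inr_desc IsPushout.inl_desc IsPushout.inr_desc
  IsPushout.inl_desc_assoc IsPushout.inr_desc_assoc

namespace CategoryTheory

/-- Pushing out `i` along `a₀` and then along `a₁` gives the same result as in the other order. -/
theorem IsPushout.iterated_swap {C : Type*} [Category C] {A A' T P₀ P₁ L : C}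
    {i : A ⟶ A'} {a₀ a₁ : A ⟶ T} {u₀ : A' ⟶ P₀} {v₀ : T ⟶ P₀} (h₀ : IsPushout i a₀ u₀ v₀)
    {u₁ : A' ⟶ P₁} {v₁ : T ⟶ P₁} (h₁ : IsPushout i a₁ u₁ v₁)
    {u : A' ⟶ L} {v : P₀ ⟶ L} (h : IsPushout i (a₁ ≫ v₀) u v)
    {ℓ : P₁ ⟶ L} (hu : u₁ ≫ ℓ = u) (hv : v₁ ≫ ℓ = v₀ ≫ v) :
    IsPushout (a₀ ≫ v₁) i ℓ (u₀ ≫ v) :=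
  h₀.flip.paste_horiz (IsPushout.of_left (hu ▸ h.flip) hv.symm h₁.flip).flip

/-- The map induced on pushouts by a map of spans `(Xb ← Xa → Xc) ⟶ (Yb ← Ya → Yc)` factors as
a cobase change of `φc` followed by a cobase change of the relative latching map
`ℓ : Xb ⊔_{Xa} Ya ⟶ Yb`. -/
theorem MorphismProperty.of_isPushout_of_latching {C : Type*} [Category C] [HasPushouts C]
    (W : MorphismProperty C) [W.IsStableUnderCobaseChange] [W.IsStableUnderComposition]
    {Xa Xb Xc Ya Yb Yc X Y L : C}
    {l : Xa ⟶ Xb} {r : Xa ⟶ Xc} {bX : Xb ⟶ X} {cX : Xc ⟶ X} (sqX : IsPushout l r bX cX)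
    {l' : Ya ⟶ Yb} {r' : Ya ⟶ Yc} {bY : Yb ⟶ Y} {cY : Yc ⟶ Y} (sqY : IsPushout l' r' bY cY)
    {φa : Xa ⟶ Ya} {φc : Xc ⟶ Yc} (hr : r ≫ φc = φa ≫ r')
    {u : Xb ⟶ L} {v : Ya ⟶ L} (sqL : IsPushout l φa u v) {ℓ : L ⟶ Yb} (hv : v ≫ ℓ = l')
    (hφc : W φc) (hℓ : W ℓ) {φ : X ⟶ Y} (hb : bX ≫ φ = u ≫ ℓ ≫ bY)
    (hc : cX ≫ φ = φc ≫ cY) : W φ := by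
  have sqR := IsPushout.of_hasPushout v r'
  have sq₁ := IsPushout.of_top' (hr ▸ sqL.paste_vert sqR) sqX
  have sq₂ := IsPushout.of_left' (hv ▸ sqY) sqR
  convert W.comp_mem _ _ (W.of_isPushout sq₁ hφc) (W.of_isPushout sq₂.flip hℓ) using 1
  apply sqX.hom_ext <;> simp [hb, hc]

end CategoryTheory

namespace ModelStructure

variable {M : Type u} [Category.{v} M] (ms : ModelStructure M)

lemma isStableUnderRetracts {P : MorphismProperty M} (hP : P = ms.W ∨ P = ms.Fib ∨ P = ms.Cof) :
    P.IsStableUnderRetracts where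
  of_retract h hg := ms.retract P hP _ _ h.i.left h.r.left h.i.right h.r.right
    h.retract_left h.retract_right h.i_w h.r_w hg

abbrev toModelCategory [HasFiniteLimits M] [HasFiniteColimits M] : ModelCategory M :=
  letI : CategoryWithWeakEquivalences M := ⟨ms.W⟩
  letI : CategoryWithFibrations M := ⟨ms.Fib⟩
  letI : CategoryWithCofibrations M := ⟨ms.Cof⟩
  { cm2 := by exact ms.w_two_out_of_three
    cm3a := ms.isStableUnderRetracts (.inl rfl)
    cm3b := ms.isStableUnderRetracts (.inr (.inl rfl))
    cm3c := ms.isStableUnderRetracts (.inr (.inr rfl))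
    cm4a i p _ _ _ := ms.lift_trivCof_fib i p (mem_cofibrations i) (mem_weakEquivalences i)
      (mem_fibrations p)
    cm4b i p _ _ _ := ms.lift_cof_trivFib i p (mem_cofibrations i) (mem_fibrations p)
      (mem_weakEquivalences p)
    cm5a := ⟨fun f => by
      obtain ⟨Z, i, p, hi, hiw, hp, fac⟩ := ms.fact_trivCof_fib f
      exact ⟨{ Z, i, p, fac, hi := ⟨hi, hiw⟩, hp }⟩⟩
    cm5b := ⟨fun f => by
      obtain ⟨Z, i, p, hi, hp, hpw, fac⟩ := ms.fact_cof_trivFib f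
      exact ⟨{ Z, i, p, fac, hi, hp := ⟨hp, hpw⟩ }⟩⟩ }

end ModelStructure

namespace HomotopicalAlgebra

variable {C : Type*} [Category C] [ModelCategory C]

lemma weakEquivalence_pushout_desc {A A' T Z : C} {i : A ⟶ A'} {a : A ⟶ T} [Cofibration a]
    [WeakEquivalence a] {j : A' ⟶ Z} [WeakEquivalence j] {l : T ⟶ Z} (w : i ≫ j = a ≫ l) :
    WeakEquivalence (pushout.desc j l w) :=
  weakEquivalence_of_precomp_of_fac (pushout.inl_desc _ _ _)

theorem Cylinder.exists_relative {A A' : C} [IsCofibrant A] (P : Cylinder A) [P.IsGood]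
    (i : A ⟶ A') [Cofibration i] :
    ∃ (Q : Cylinder A') (l : P.I ⟶ Q.I) (w₀ : i ≫ Q.i₀ = P.i₀ ≫ l)
      (w₁ : i ≫ Q.i₁ = P.i₁ ≫ l), l ≫ Q.π = P.π ≫ i ∧
      trivialCofibrations C (pushout.desc _ _ w₀) ∧
      trivialCofibrations C (pushout.desc _ _ w₁) := by
  -- `Q.I` factors the map to `A'` from `pushout i (P.i₁ ≫ pushout.inr i P.i₀)`,
  -- which is `P.I ⊔_{A ⨿ A} (A' ⨿ A')`
  have h₀ := IsPushout.of_hasPushout i P.i₀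
  have hL := IsPushout.of_hasPushout i (P.i₁ ≫ pushout.inr i P.i₀)
  let m : pushout i (P.i₁ ≫ pushout.inr i P.i₀) ⟶ A' :=
    pushout.desc (𝟙 A') (pushout.desc (𝟙 A') (P.π ≫ i) (by simp)) (by simp)
  let F := factorizationData (cofibrations C) (trivialFibrations C) m
  have : WeakEquivalence F.p := ((mem_trivialFibrations_iff _).1 F.hp).2
  let Q : Cylinder A' :=
    { I := F.Z
      i₀ := pushout.inl _ _ ≫ pushout.inr _ _ ≫ F.i
      i₁ := pushout.inl _ _ ≫ F.i
      π := F.p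
      i₀_π := by simp [m]
      i₁_π := by simp [m] }
  have : WeakEquivalence Q.i₀ := weakEquivalence_of_postcomp_of_fac Q.i₀_π
  have : WeakEquivalence Q.i₁ := weakEquivalence_of_postcomp_of_fac Q.i₁_π
  let l : P.I ⟶ Q.I := pushout.inr _ _ ≫ pushout.inr _ _ ≫ F.i
  have w₀ : i ≫ Q.i₀ = P.i₀ ≫ l := by simp [Q, l, pushout.condition_assoc]
  have w₁ : i ≫ Q.i₁ = P.i₁ ≫ l := by simp [Q, l, pushout.condition_assoc]
  let ℓ₁ : pushout i P.i₁ ⟶ pushout i (P.i₁ ≫ pushout.inr i P.i₀) :=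
    pushout.desc (pushout.inl _ _) (pushout.inr _ _ ≫ pushout.inr _ _) (by simp [hL.w])
  have h₁ := h₀.iterated_swap (IsPushout.of_hasPushout i P.i₁) hL (ℓ := ℓ₁) (by simp [ℓ₁])
    (by simp [ℓ₁])
  have fac₀ : pushout.desc Q.i₀ l w₀ = pushout.inr _ _ ≫ F.i := by
    apply pushout.hom_ext <;> simp [Q, l]
  have fac₁ : pushout.desc Q.i₁ l w₁ = ℓ₁ ≫ F.i := by
    apply pushout.hom_ext <;> simp [Q, l, ℓ₁]
  refine ⟨Q, l, w₀, w₁, by simp [Q, l, m],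
    ⟨?_, (weakEquivalence_pushout_desc w₀).mem⟩, ⟨?_, (weakEquivalence_pushout_desc w₁).mem⟩⟩
  · rw [fac₀]; exact comp_mem _ _ _ (of_isPushout hL.flip (mem_cofibrations i)) F.hi
  · rw [fac₁]; exact comp_mem _ _ _ (of_isPushout h₁ (mem_cofibrations i)) F.hi

theorem CofibrantBrownFactorization.exists_leftHomotopy {A B : C} {f : A ⟶ B}
    (h : CofibrantBrownFactorization f) (P : Cylinder A) [P.IsGood] :
    ∃ H : P.LeftHomotopy h.i (f ≫ h.s), H.h ≫ h.p = P.π ≫ f := by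
  obtain ⟨_, _⟩ := (mem_trivialFibrations_iff _).1 h.hp
  have sq : CommSq (coprod.desc h.i (f ≫ h.s)) P.i h.p (P.π ≫ f) := ⟨by ext <;> simp⟩
  exact ⟨{ h := sq.lift
           h₀ := by rw [← P.inl_i, Category.assoc, sq.fac_left, coprod.inl_desc]
           h₁ := by rw [← P.inr_i, Category.assoc, sq.fac_left, coprod.inr_desc] }, sq.fac_right⟩

theorem weakEquivalence_of_isPushout {A B A' B' : C} {f : A ⟶ B} {i : A ⟶ A'} {i' : B ⟶ B'}
    {f' : A' ⟶ B'} (sq : IsPushout f i i' f') [IsCofibrant A] [IsCofibrant B]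
    [WeakEquivalence f] [Cofibration i] : WeakEquivalence f' := by
  obtain ⟨P, _⟩ := Cylinder.exists_very_good A
  let h : CofibrantBrownFactorization f := Classical.arbitrary _
  obtain ⟨H, hH⟩ := h.exists_leftHomotopy P
  obtain ⟨Q, l, w₀, w₁, hl, hℓ₀, hℓ₁⟩ := P.exists_relative i
  have sqZ := IsPushout.of_hasPushout l H.h
  have : Cofibration h.i := (cofibration_iff _).2 h.hi
  have hκ₀ : WeakEquivalence (Q.i₀ ≫ pushout.inl l H.h) :=
    ((mem_trivialCofibrations_iff _).1 <| MorphismProperty.of_isPushout_of_latching _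
      (IsPushout.id_vert i) sqZ (by simp) (IsPushout.of_hasPushout i P.i₀) (pushout.inr_desc _ _ _)
      (mem_trivialCofibrations h.i) hℓ₀ (by simp) (by simp [reassoc_of% w₀, pushout.condition])).2
  let κ₁ := sq.flip.desc (Q.i₁ ≫ pushout.inl l H.h) (h.s ≫ pushout.inr l H.h)
    (by simp [reassoc_of% w₁, pushout.condition])
  have hκ₁ : WeakEquivalence κ₁ :=
    ((mem_trivialCofibrations_iff _).1 <| MorphismProperty.of_isPushout_of_latching _
      sq.flip sqZ H.h₁.symm (IsPushout.of_hasPushout i P.i₁) (pushout.inr_desc _ _ _)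
      (mem_trivialCofibrations h.s) hℓ₁ (by simp [κ₁]) (by simp [κ₁])).2
  let ρ := pushout.desc (Q.π ≫ f') (h.p ≫ i') (by rw [reassoc_of% hl, reassoc_of% hH, sq.w])
  have : WeakEquivalence ρ := by
    refine weakEquivalence_of_precomp_of_fac (f := κ₁) (fg := 𝟙 B') ?_
    apply sq.flip.hom_ext <;> simp [κ₁, ρ]
  rw [show f' = (Q.i₀ ≫ pushout.inl l H.h) ≫ ρ by simp [ρ]]
  infer_instance

end HomotopicalAlgebra

/-- Weak equivalences between cofibrant objects are closed
under cobase change along cofibrations. -/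
theorem weq_cofibrant_stable_under_cobase_change {M : Type u}
    [Category.{v} M] [HasLimits M] [HasColimits M] (ms : ModelStructure M)
    {A B A' B' : M} (f : A ⟶ B) (i : A ⟶ A') (i' : B ⟶ B') (f' : A' ⟶ B')
    (sq : IsPushout f i i' f')
    (hA : ms.Cofibrant A) (hB : ms.Cofibrant B)
    (hf : ms.W f) (hi : ms.Cof i) :
    ms.W f' := by
  let _ := ms.toModelCategory
  have : IsCofibrant A := ⟨hA⟩
  have : IsCofibrant B := ⟨hB⟩
  have : WeakEquivalence f := ⟨hf⟩
  have : Cofibration i := ⟨hi⟩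
  exact (weakEquivalence_of_isPushout sq).mem
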